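/- Let D(n,d,l) denote the sum of the weights ω(mz) over all Motzkin paths mz of width n, area d, and last fall length l, with the convention that D(n,d,l) = 0 whenever n < 0, d < 0 or l < 0, and base case D(0,0,0) = 1. Then for all n ≥ 1, all d ≥ 0 and all l ≥ 0, the recurrence D(n,d,l) = (2l+1)·Σ_{l' ≥ l} D(n−1, d−l, l') + l²·Σ_{l' ≥ l−1} D(n−2, d−(2l−1), l') holds. -/

import Mathlib

/-- Moves of a Motzkin path: Up-right, Horizontal-right, Down-right. -/
inductive Move : Type
  | U : Move
  | H : Move
  | D : Move
deriving DecidableEq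

open Move

/-- The vertical step of a move. -/
def Move.step : Move → ℤ
  | U => 1
  | H => 0
  | D => -1

/-- The height of a path after its first `i` moves. -/
def heightAt (mz : List Move) (i : ℕ) : ℤ :=
  ((mz.take i).map Move.step).sum

/-- A word over {U,H,D} is a Motzkin path if it never goes below the x-axis
and ends on the x-axis. -/
def IsMotzkin (mz : List Move) : Prop :=
  (∀ i, 0 ≤ heightAt mz i) ∧ heightAt mz mz.length = 0

/-- The area between the x-axis and the path (sum of heights at integer points). -/
def area (mz : List Move) : ℤ :=
  ∑ i ∈ Finset.range (mz.length + 1), heightAt mz i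

/-- `MZ n A` is the set of Motzkin paths of width `n` and area `A`. -/
def MZ (n A : ℕ) : Set (List Move) :=
  {mz | mz.length = n ∧ IsMotzkin mz ∧ area mz = A}

/-- The weight `ω_i` of the `i`-th move (0-indexed): it is `h_i` for U and D moves
(height after the move for U, before the move for D) and `2h_i + 1` for H moves. -/
def moveWeight (mz : List Move) (i : ℕ) : ℤ :=
  match mz[i]? with
  | some U => heightAt mz (i + 1)
  | some D => heightAt mz i
  | some H => 2 * heightAt mz i + 1
  | none => 1

/-- The weight `ω(mz)` of a Motzkin path. -/
def weight (mz : List Move) : ℤ :=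
  ∏ i ∈ Finset.range mz.length, moveWeight mz i

/-- The total displacement `D(π) = Σ_i |i - π(i)|` of a permutation. -/
def totalDisp {n : ℕ} (π : Equiv.Perm (Fin n)) : ℤ :=
  ∑ i : Fin n, |((π i : ℕ) : ℤ) - ((i : ℕ) : ℤ)|

/-- The word over {U,H,D} associated to a permutation. -/
def toPath {n : ℕ} (π : Equiv.Perm (Fin n)) : List Move :=
  (List.finRange n).map fun i : Fin n =>
    if (i : ℕ) < (π i : ℕ) ∧ (i : ℕ) < (π.symm i : ℕ) then U
    else if (π i : ℕ) < (i : ℕ) ∧ (π.symm i : ℕ) < (i : ℕ) then D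
    else H

/-- The last fall length: the length of the maximal suffix consisting of D moves. -/
def lastFall (mz : List Move) : ℕ :=
  (mz.reverse.takeWhile (fun m => decide (m = D))).length

/-- The maximum height of a path. -/
def maxHeight (mz : List Move) : ℕ :=
  (Finset.range (mz.length + 1)).sup fun i => (heightAt mz i).toNat

/-- `flatsAt mz k` is the number of H moves of `mz` made at height `k`. -/
def flatsAt (mz : List Move) (k : ℕ) : ℕ :=
  ((Finset.range mz.length).filter fun j => mz[j]? = some H ∧ heightAt mz j = (k : ℤ)).card

/-- `peaksAt mz k` is the number of U moves of `mz` ending at height `k`. -/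
def peaksAt (mz : List Move) (k : ℕ) : ℕ :=
  ((Finset.range mz.length).filter fun j => mz[j]? = some U ∧ heightAt mz (j + 1) = (k : ℤ)).card

/-- `downsAt mz k` is the number of D moves of `mz` starting at height `k`. -/
def downsAt (mz : List Move) (k : ℕ) : ℕ :=
  ((Finset.range mz.length).filter fun j => mz[j]? = some D ∧ heightAt mz j = (k : ℤ)).card

/-- A candidate building sequence `(f_0, p_1, f_1, …, p_h, f_h)`, recorded as its
height `h` together with the flat counts `f` and peak counts `p`. -/
structure BSeq where
  h : ℕ
  f : ℕ → ℕ
  p : ℕ → ℕ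

/-- `Sset n A` is the set of building sequences for width `n` and area `A`:
all `p`-entries `p_1, …, p_h` are positive, entries beyond the height are zero, and the
width and area conditions hold. -/
def Sset (n A : ℕ) : Set BSeq :=
  {a | (∀ i, 1 ≤ i → i ≤ a.h → 0 < a.p i) ∧
       a.p 0 = 0 ∧
       (∀ i, a.h < i → a.p i = 0) ∧
       (∀ i, a.h < i → a.f i = 0) ∧
       (∑ i ∈ Finset.range (a.h + 1), a.f i) + 2 * (∑ i ∈ Finset.Icc 1 a.h, a.p i) = n ∧
       (∑ i ∈ Finset.range (a.h + 1), i * a.f i) +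
         (∑ i ∈ Finset.Icc 1 a.h, (2 * i - 1) * a.p i) = A}

/-- `mz` has building sequence `a`. -/
def hasBuildSeq (mz : List Move) (a : BSeq) : Prop :=
  maxHeight mz = a.h ∧ (∀ i, flatsAt mz i = a.f i) ∧ (∀ i, peaksAt mz i = a.p i)

/-- `perm(a) = ∏_{i=0}^h (2i+1)^{f_i} · ∏_{i=1}^h i^{2p_i}`. -/
def permWeight (a : BSeq) : ℕ :=
  (∏ i ∈ Finset.range (a.h + 1), (2 * i + 1) ^ a.f i) *
    ∏ i ∈ Finset.Icc 1 a.h, i ^ (2 * a.p i)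

/-- `m(a)`, the number of Motzkin paths with building sequence `a`. -/
def mcount (a : BSeq) : ℕ :=
  Nat.choose (a.f a.h + a.p a.h - 1) (a.p a.h - 1) *
    (∏ i ∈ Finset.Icc 1 (a.h - 1),
      Nat.choose (a.p (i + 1) + a.f i) (a.f i) *
        Nat.choose (a.p (i + 1) + a.f i + a.p i - 1) (a.p i - 1)) *
    Nat.choose (a.p 1 + a.f 0) (a.f 0)

/-- `M(n,A,l)`: the number of Motzkin paths of width `n`, area `A` and last fall length `l`
(for negative arguments there are no such paths, so the value is `0`; the value at
`(0,0,0)` is `1`, counting the empty path). -/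
noncomputable def Mcount (n A l : ℤ) : ℕ :=
  Nat.card {mz : List Move // (mz.length : ℤ) = n ∧ IsMotzkin mz ∧ area mz = A ∧
    (lastFall mz : ℤ) = l}

/-- `D(n,d,l)`: the sum of the weights of all Motzkin paths of width `n`, area `d` and
last fall length `l`. -/
noncomputable def Dw (n d l : ℤ) : ℤ :=
  ∑ᶠ mz ∈ {mz : List Move | (mz.length : ℤ) = n ∧ IsMotzkin mz ∧ area mz = d ∧
    (lastFall mz : ℤ) = l}, weight mz

/-- `M(n,A,h,p)`: the number of Motzkin paths of width `n`, area `A`, maximum height `h`,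
with exactly `p` U-moves ending at height `h` and no H-moves at height `h`. -/
noncomputable def Mtop (n A h p : ℤ) : ℕ :=
  Nat.card {mz : List Move // (mz.length : ℤ) = n ∧ IsMotzkin mz ∧ area mz = A ∧
    (maxHeight mz : ℤ) = h ∧ (peaksAt mz h.toNat : ℤ) = p ∧ flatsAt mz h.toNat = 0}

/-- `D(n,d,h,p)`: the sum of weights of Motzkin paths of width `n`, area `d`,
maximum height `h`, with exactly `p` U-moves ending at height `h` and no H-moves at height `h`. -/
noncomputable def Dtop (n d h p : ℤ) : ℤ :=
  ∑ᶠ mz ∈ {mz : List Move | (mz.length : ℤ) = n ∧ IsMotzkin mz ∧ area mz = d ∧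
    (maxHeight mz : ℤ) = h ∧ (peaksAt mz h.toNat : ℤ) = p ∧ flatsAt mz h.toNat = 0}, weight mz

/-- The area under the first `i` moves of a path (trapezoid rule; may be a half-integer). -/
def prefixArea (mz : List Move) (i : ℕ) : ℚ :=
  ∑ j ∈ Finset.range i, ((heightAt mz j : ℚ) + (heightAt mz (j + 1) : ℚ)) / 2

/-! Cutting off the final run of `D`s, a path with last fall `l < n` is `v ++ x :: Dˡ` with
`x ∈ {H, U}` and `v` a nonnegative path ending at height `l - x.step`, and a path with last fall
`≥ k` is `v ++ Dᵏ` with `v` ending at height `k`. Area and weight change by a shift and a factor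
depending only on the cut-off suffix (`∑_{i ≤ l} i` and `(2l+1)·l!` or `l·l!`, resp. `∑_{i<k} i`
and `k!`), so both sides of the recurrence become multiples of the same weighted counts of
nonnegative prefixes `v`. -/

open Move List
open scoped Nat

instance : Fintype Move := ⟨{U, H, D}, fun x => by cases x <;> simp⟩

lemma heightAt_zero (v : List Move) : heightAt v 0 = 0 := by
  simp [heightAt]

lemma heightAt_append_of_le (u w : List Move) {i : ℕ} (h : i ≤ u.length) :
    heightAt (u ++ w) i = heightAt u i := by
  rw [heightAt, take_append, Nat.sub_eq_zero_of_le h, take_zero, append_nil, heightAt]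

lemma heightAt_append_length_add (u w : List Move) (j : ℕ) :
    heightAt (u ++ w) (u.length + j) = heightAt u u.length + heightAt w j := by
  simp [heightAt, take_append, take_of_length_le]

lemma heightAt_of_length_le (v : List Move) {i : ℕ} (h : v.length ≤ i) :
    heightAt v i = heightAt v v.length := by
  rw [heightAt, take_of_length_le h, heightAt, take_length]

lemma heightAt_replicate_D (k j : ℕ) : heightAt (replicate k D) j = -(min j k : ℕ) := by
  simp [heightAt, take_replicate, Move.step]

lemma heightAt_cons_succ (x : Move) (w : List Move) (j : ℕ) :
    heightAt (x :: w) (j + 1) = x.step + heightAt w j := by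
  simp [heightAt]

lemma isMotzkin_append_iff {v t : List Move} :
    IsMotzkin (v ++ t) ↔ (∀ i, 0 ≤ heightAt v i) ∧
      (∀ j, 0 ≤ heightAt v v.length + heightAt t j) ∧
      heightAt v v.length + heightAt t t.length = 0 := by
  simp only [IsMotzkin, length_append, ← heightAt_append_length_add]
  refine ⟨fun ⟨hnn, hend⟩ => ⟨fun i => ?_, fun j => hnn _, hend⟩,
    fun ⟨hv, ht, hend⟩ => ⟨fun i => ?_, hend⟩⟩
  · rcases le_total i v.length with hi | hi
    · rw [← heightAt_append_of_le v t hi]; exact hnn i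
    · rw [heightAt_of_length_le v hi, ← heightAt_append_of_le v t le_rfl]; exact hnn _
  · rcases le_total i v.length with hi | hi
    · rw [heightAt_append_of_le v t hi]; exact hv i
    · obtain ⟨j, rfl⟩ := Nat.exists_eq_add_of_le hi
      exact ht j

lemma heightAt_concat_length (v : List Move) (x : Move) :
    heightAt (v ++ [x]) (v.length + 1) = heightAt v v.length + x.step := by
  simp [heightAt]

lemma area_concat (v : List Move) (x : Move) :
    area (v ++ [x]) = area v + (heightAt v v.length + x.step) := by
  rw [area, length_append, length_singleton, Finset.sum_range_succ, heightAt_concat_length, area]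
  congr 1
  exact Finset.sum_congr rfl fun i hi =>
    heightAt_append_of_le v [x] (Nat.lt_succ_iff.mp (Finset.mem_range.mp hi))

lemma weight_concat (v : List Move) (x : Move) :
    weight (v ++ [x]) = weight v * moveWeight (v ++ [x]) v.length := by
  rw [weight, length_append, length_singleton, Finset.prod_range_succ, weight]
  congr 1
  refine Finset.prod_congr rfl fun i hi => ?_
  have hi : i < v.length := Finset.mem_range.mp hi
  simp only [moveWeight, getElem?_append_left hi, heightAt_append_of_le v [x] hi.le,
    heightAt_append_of_le v [x] (Nat.succ_le_of_lt hi)]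

lemma weight_concat_D (v : List Move) : weight (v ++ [D]) = weight v * heightAt v v.length := by
  simp [weight_concat, moveWeight, heightAt_append_of_le]

lemma weight_concat_H (v : List Move) :
    weight (v ++ [H]) = weight v * (2 * heightAt v v.length + 1) := by
  simp [weight_concat, moveWeight, heightAt_append_of_le]

lemma weight_concat_U (v : List Move) :
    weight (v ++ [U]) = weight v * (heightAt v v.length + 1) := by
  simp [weight_concat, moveWeight, heightAt_concat_length, Move.step]

lemma heightAt_concat_D_length {v : List Move} {k : ℕ} (hv : heightAt v v.length = k + 1) :
    heightAt (v ++ [D]) (v ++ [D]).length = k := by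
  rw [length_append, length_singleton, heightAt_concat_length, hv, Move.step]; ring

lemma weight_append_replicate_D {v : List Move} {k : ℕ} (hv : heightAt v v.length = k) :
    weight (v ++ replicate k D) = k ! * weight v := by
  induction k generalizing v with
  | zero => simp
  | succ k ih =>
    rw [replicate_succ, ← singleton_append, ← append_assoc, ih (heightAt_concat_D_length hv),
      weight_concat_D, hv, Nat.factorial_succ]
    push_cast; ring

lemma area_append_replicate_D {v : List Move} {k : ℕ} (hv : heightAt v v.length = k) :
    area (v ++ replicate k D) = area v + ∑ i ∈ Finset.range k, (i : ℤ) := by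
  induction k generalizing v with
  | zero => simp
  | succ k ih =>
    rw [replicate_succ, ← singleton_append, ← append_assoc, ih (heightAt_concat_D_length hv),
      area_concat, hv, Finset.sum_range_succ, Move.step]
    push_cast; ring

lemma area_append_cons_replicate_D {v : List Move} {x : Move} {k : ℕ}
    (hv : heightAt v v.length + x.step = k) :
    area (v ++ x :: replicate k D) = area v + ∑ i ∈ Finset.range (k + 1), (i : ℤ) := by
  rw [← singleton_append, ← append_assoc,
    area_append_replicate_D (by simpa [heightAt_concat_length]), area_concat, hv,
    Finset.sum_range_succ]
  ring

lemma weight_append_H_replicate_D {v : List Move} {k : ℕ} (hv : heightAt v v.length = k) :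
    weight (v ++ H :: replicate k D) = (2 * k + 1) * k ! * weight v := by
  rw [← singleton_append, ← append_assoc,
    weight_append_replicate_D (by simpa [heightAt_concat_length, Move.step]), weight_concat_H, hv]
  ring

lemma weight_append_U_replicate_D {v : List Move} {k : ℕ} (hv : heightAt v v.length + 1 = k) :
    weight (v ++ U :: replicate k D) = k * k ! * weight v := by
  rw [← singleton_append, ← append_assoc,
    weight_append_replicate_D (by simpa [heightAt_concat_length, Move.step]), weight_concat_U, hv]
  ring

lemma replicate_isPrefix_iff_le_length_takeWhile {α : Type*} [DecidableEq α] {a : α} {l : List α}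
    {k : ℕ} : replicate k a <+: l ↔ k ≤ (l.takeWhile (fun b => decide (b = a))).length := by
  induction l generalizing k with
  | nil => simp
  | cons b l ih =>
    rcases k with _ | k
    · simp
    by_cases hb : b = a
    · subst hb; simp [replicate_succ, ih]
    · simp [replicate_succ, hb, Ne.symm hb]

lemma replicate_D_isSuffix_iff_le_lastFall {mz : List Move} {k : ℕ} :
    replicate k D <:+ mz ↔ k ≤ lastFall mz := by
  rw [← reverse_prefix, reverse_replicate, lastFall, replicate_isPrefix_iff_le_length_takeWhile]

lemma lastFall_append_cons_replicate_D (u : List Move) {x : Move} (hx : x ≠ D) (k : ℕ) :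
    lastFall (u ++ x :: replicate k D) = k := by
  simp [lastFall, hx]

lemma lastFall_eq_iff {mz : List Move} {k : ℕ} (hk : k < mz.length) :
    lastFall mz = k ↔ H :: replicate k D <:+ mz ∨ U :: replicate k D <:+ mz := by
  constructor
  · intro h
    obtain ⟨w, rfl⟩ := replicate_D_isSuffix_iff_le_lastFall.2 h.ge
    obtain rfl | ⟨u, x, rfl⟩ := eq_nil_or_concat w
    · simp at hk
    rw [concat_eq_append] at h hk ⊢
    have hsuffix : x :: replicate k D <:+ u ++ [x] ++ replicate k D := ⟨u, by simp⟩
    cases x with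
    | U => exact Or.inr hsuffix
    | H => exact Or.inl hsuffix
    | D =>
      rw [← replicate_succ, replicate_D_isSuffix_iff_le_lastFall] at hsuffix
      omega
  · rintro (⟨u, rfl⟩ | ⟨u, rfl⟩) <;> exact lastFall_append_cons_replicate_D u (by simp) k

lemma lastFall_le_length (mz : List Move) : lastFall mz ≤ mz.length := by
  simpa using (replicate_D_isSuffix_iff_le_lastFall.2 le_rfl).length_le

def nonnegPaths (m : ℕ) (e a : ℤ) : Set (List Move) :=
  {v | v.length = m ∧ (∀ i, 0 ≤ heightAt v i) ∧ heightAt v v.length = e ∧ area v = a}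

noncomputable def nonnegPathWeight (m : ℕ) (e a : ℤ) : ℤ :=
  ∑ᶠ v ∈ nonnegPaths m e a, weight v

-- Excluding `j = 0` admits `e = -1` (a final `U`), for which `nonnegPaths` is empty.
lemma finsum_weight_of_isSuffix (t : List Move) {e a c : ℤ}
    (hend : e + heightAt t t.length = 0) (hnonneg : ∀ j ≠ 0, 0 ≤ e + heightAt t j)
    (harea : ∀ v, heightAt v v.length = e → area (v ++ t) = area v + a)
    (hweight : ∀ v, heightAt v v.length = e → weight (v ++ t) = c * weight v) (m : ℕ) (d : ℤ) :
    ∑ᶠ mz ∈ {mz | mz.length = m + t.length ∧ IsMotzkin mz ∧ area mz = d ∧ t <:+ mz}, weight mz =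
      c * nonnegPathWeight m e (d - a) := by
  rw [nonnegPathWeight, mul_finsum_mem]
  refine (finsum_mem_eq_of_bijOn (· ++ t) ⟨?_, ?_, ?_⟩ ?_).symm
  · rintro v ⟨hlen, hnn, hv, hav⟩
    refine ⟨by simp [hlen], isMotzkin_append_iff.2 ⟨hnn, fun j => ?_, hv ▸ hend⟩,
      by rw [harea v hv, hav]; ring, suffix_append v t⟩
    rcases eq_or_ne j 0 with rfl | hj
    · simpa [heightAt_zero] using hnn v.length
    · exact hv ▸ hnonneg j hj
  · exact fun v _ w _ h => append_cancel_right h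
  · rintro mz ⟨hlen, hmz, hav, v, rfl⟩
    obtain ⟨hnn, -, hv0⟩ := isMotzkin_append_iff.1 hmz
    have hv : heightAt v v.length = e := by linarith
    exact ⟨v, ⟨by simpa using hlen, hnn, hv, by rw [harea v hv] at hav; linarith⟩, rfl⟩
  · rintro v ⟨-, -, hv, -⟩
    exact (hweight v hv).symm

lemma finsum_mem_finsum_mem_fiber {α β M : Type*} [AddCommMonoid M] {s : Set α} (hs : s.Finite)
    (f : α → β) (t : Set β) (g : α → M) :
    ∑ᶠ b ∈ t, ∑ᶠ a ∈ {a | a ∈ s ∧ f a = b}, g a = ∑ᶠ a ∈ {a | a ∈ s ∧ f a ∈ t}, g a := by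
  have hunion : {a | a ∈ s ∧ f a ∈ t} = ⋃ b ∈ t ∩ f '' s, {a | a ∈ s ∧ f a = b} := by
    ext a
    simp only [Set.mem_iUnion, Set.mem_inter_iff, Set.mem_image, exists_prop]
    exact ⟨fun ⟨ha, hfa⟩ => ⟨f a, ⟨hfa, a, ha, rfl⟩, ha, rfl⟩,
      fun ⟨_, ⟨hb, _⟩, ha, hfa⟩ => ⟨ha, hfa ▸ hb⟩⟩
  rw [hunion, finsum_mem_biUnion _ ((hs.image f).subset Set.inter_subset_right)
    fun b _ => hs.subset fun a ha => ha.1]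
  · refine finsum_mem_inter_support_eq' _ _ _ fun b hb => ⟨fun hbt => ⟨hbt, ?_⟩, fun h => h.1⟩
    by_contra hb'
    exact hb (finsum_mem_of_eqOn_zero fun a ha => absurd ⟨a, ha.1, ha.2⟩ hb')
  · exact fun b _ b' _ hne => Set.disjoint_left.2 fun a ha ha' => hne (ha.2 ▸ ha'.2)

lemma finsum_weight_of_replicate_D_isSuffix (k m : ℕ) (d : ℤ) :
    ∑ᶠ mz ∈ {mz | mz.length = m + k ∧ IsMotzkin mz ∧ area mz = d ∧ replicate k D <:+ mz},
      weight mz = k ! * nonnegPathWeight m k (d - ∑ i ∈ Finset.range k, (i : ℤ)) := by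
  simpa using finsum_weight_of_isSuffix (replicate k D) (e := k)
    (by simp [heightAt_replicate_D]) (fun j _ => by simp [heightAt_replicate_D])
    (fun v hv => area_append_replicate_D hv) (fun v hv => weight_append_replicate_D hv) m d

lemma finsum_weight_of_cons_replicate_D_isSuffix (x : Move) (k : ℕ) {c : ℤ}
    (hweight : ∀ v, heightAt v v.length + x.step = k →
      weight (v ++ x :: replicate k D) = c * weight v)
    (m : ℕ) (d : ℤ) :
    ∑ᶠ mz ∈ {mz | mz.length = m + (k + 1) ∧ IsMotzkin mz ∧ area mz = d ∧
        x :: replicate k D <:+ mz}, weight mz =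
      c * nonnegPathWeight m (k - x.step) (d - ∑ i ∈ Finset.range (k + 1), (i : ℤ)) := by
  have hheight : ∀ j, heightAt (x :: replicate k D) (j + 1) = x.step - (min j k : ℕ) := by
    simp [heightAt_cons_succ, heightAt_replicate_D, sub_eq_add_neg]
  simpa using finsum_weight_of_isSuffix (x :: replicate k D) (e := k - x.step)
    (by simp [hheight])
    (fun j hj => by obtain ⟨j, rfl⟩ := Nat.exists_eq_succ_of_ne_zero hj; simp [hheight])
    (fun v hv => area_append_cons_replicate_D (by linarith))
    (fun v hv => hweight v (by linarith)) m d

lemma Dw_natCast (N : ℕ) (d : ℤ) (k : ℕ) :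
    Dw N d k = ∑ᶠ mz ∈ {mz | mz.length = N ∧ IsMotzkin mz ∧ area mz = d ∧ lastFall mz = k},
      weight mz := by
  simp only [Dw, Nat.cast_inj]

lemma Dw_add_one_add (m k : ℕ) (d : ℤ) :
    Dw (m + 1 + k : ℕ) d k =
      (2 * k + 1) * k ! * nonnegPathWeight m k (d - ∑ i ∈ Finset.range (k + 1), (i : ℤ)) +
      k * k ! * nonnegPathWeight m (k - 1) (d - ∑ i ∈ Finset.range (k + 1), (i : ℤ)) := by
  let endsWith (x : Move) : Set (List Move) :=
    {mz | mz.length = m + (k + 1) ∧ IsMotzkin mz ∧ area mz = d ∧ x :: replicate k D <:+ mz}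
  have hsplit : {mz | mz.length = m + 1 + k ∧ IsMotzkin mz ∧ area mz = d ∧ lastFall mz = k} =
      endsWith H ∪ endsWith U := by
    ext mz
    simp only [endsWith, Set.mem_union, Set.mem_ofPred_eq]
    constructor
    · rintro ⟨hlen, hmz, ha, hlf⟩
      rcases (lastFall_eq_iff (by omega)).1 hlf with h | h
      exacts [Or.inl ⟨by omega, hmz, ha, h⟩, Or.inr ⟨by omega, hmz, ha, h⟩]
    · rintro (⟨hlen, hmz, ha, h⟩ | ⟨hlen, hmz, ha, h⟩)
      · exact ⟨by omega, hmz, ha, (lastFall_eq_iff (by omega)).2 (Or.inl h)⟩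
      · exact ⟨by omega, hmz, ha, (lastFall_eq_iff (by omega)).2 (Or.inr h)⟩
  have hdisjoint : Disjoint (endsWith H) (endsWith U) := by
    refine Set.disjoint_left.2 fun mz hH hU => ?_
    have := (suffix_of_suffix_length_le hH.2.2.2 hU.2.2.2 (by simp)).eq_of_length (by simp)
    simp at this
  have hfinite (x : Move) : (endsWith x).Finite :=
    (finite_length_eq Move _).subset fun mz hmz => hmz.1
  rw [Dw_natCast, hsplit, finsum_mem_union hdisjoint (hfinite H) (hfinite U),
    finsum_weight_of_cons_replicate_D_isSuffix H k
      (fun v hv => weight_append_H_replicate_D (by simpa [Move.step] using hv)),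
    finsum_weight_of_cons_replicate_D_isSuffix U k
      (fun v hv => weight_append_U_replicate_D (by simpa [Move.step] using hv))]
  simp [Move.step]

lemma finsum_Dw_ge (m k : ℕ) (d : ℤ) :
    ∑ᶠ l' ∈ {l' : ℤ | k ≤ l'}, Dw (m + k : ℕ) d l' =
      k ! * nonnegPathWeight m k (d - ∑ i ∈ Finset.range k, (i : ℤ)) := by
  let paths : Set (List Move) := {mz | mz.length = m + k ∧ IsMotzkin mz ∧ area mz = d}
  have hfiber (l' : ℤ) : Dw (m + k : ℕ) d l' =
      ∑ᶠ mz ∈ {mz | mz ∈ paths ∧ (lastFall mz : ℤ) = l'}, weight mz := by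
    simp only [Dw, paths, Nat.cast_inj, Set.mem_ofPred_eq, and_assoc]
  have hsuffix : {mz | mz ∈ paths ∧ (lastFall mz : ℤ) ∈ {l' : ℤ | k ≤ l'}} =
      {mz | mz.length = m + k ∧ IsMotzkin mz ∧ area mz = d ∧ replicate k D <:+ mz} := by
    ext mz
    simp [paths, replicate_D_isSuffix_iff_le_lastFall, and_assoc]
  rw [finsum_mem_congr rfl fun l' _ => hfiber l',
    finsum_mem_finsum_mem_fiber ((finite_length_eq Move _).subset fun mz hmz => hmz.1),
    hsuffix, finsum_weight_of_replicate_D_isSuffix]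

lemma Dw_eq_zero_of_lt {n d l : ℤ} (h : n < l) : Dw n d l = 0 := by
  refine finsum_mem_of_eqOn_zero fun mz ⟨hlen, _, _, hlf⟩ => absurd (lastFall_le_length mz) ?_
  omega

lemma Dw_self_eq_zero {n : ℤ} (hn : 0 < n) (d : ℤ) : Dw n d n = 0 := by
  refine finsum_mem_of_eqOn_zero fun mz ⟨hlen, hmz, _, hlf⟩ => absurd (hmz.1 1) ?_
  have hmz : mz = replicate mz.length D :=
    ((replicate_D_isSuffix_iff_le_lastFall.2 (by omega)).eq_of_length (by simp)).symm
  rw [hmz, heightAt_replicate_D]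
  omega

theorem weighted_last_fall_recurrence_general (n d l : ℤ) (hn : 1 ≤ n) (hl : 0 ≤ l) :
    Dw n d l =
      (2 * l + 1) * (∑ᶠ l' ∈ {l' : ℤ | l ≤ l'}, Dw (n - 1) (d - l) l') +
      l ^ 2 * ∑ᶠ l' ∈ {l' : ℤ | l - 1 ≤ l'}, Dw (n - 2) (d - (2 * l - 1)) l' := by
  lift n to ℕ using (by omega)
  lift l to ℕ using hl
  rcases lt_or_ge l n with hlt | hle
  · obtain ⟨m, rfl⟩ : ∃ m, n = m + 1 + l := ⟨n - 1 - l, by omega⟩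
    rw [Dw_add_one_add, show ((m + 1 + l : ℕ) : ℤ) - 1 = (m + l : ℕ) by push_cast; ring,
      finsum_Dw_ge]
    rcases l with _ | k
    · simp
    · rw [show ((m + 1 + (k + 1) : ℕ) : ℤ) - 2 = (m + k : ℕ) by push_cast; ring,
        show ((k + 1 : ℕ) : ℤ) - 1 = k by push_cast; ring, finsum_Dw_ge]
      simp only [Finset.sum_range_succ, Nat.factorial_succ]
      push_cast
      ring_nf
  · have hrhs₁ : ∀ l' ∈ {l' : ℤ | l ≤ l'}, Dw (n - 1) (d - l) l' = 0 :=
      fun l' hl' => Dw_eq_zero_of_lt (by simp at hl'; omega)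
    have hrhs₂ : ∀ l' ∈ {l' : ℤ | l - 1 ≤ l'}, Dw (n - 2) (d - (2 * l - 1)) l' = 0 :=
      fun l' hl' => Dw_eq_zero_of_lt (by simp at hl'; omega)
    rw [finsum_mem_of_eqOn_zero hrhs₁, finsum_mem_of_eqOn_zero hrhs₂]
    rcases hle.eq_or_lt with rfl | hlt
    · simpa using Dw_self_eq_zero (by omega) d
    · simpa using Dw_eq_zero_of_lt (by omega)

/-- the weighted last-fall recurrence
`D(n,d,l) = (2l+1)·Σ_{l' ≥ l} D(n-1, d-l, l') + l²·Σ_{l' ≥ l-1} D(n-2, d-(2l-1), l')`. -/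
theorem weighted_last_fall_recurrence (n d l : ℤ) (hn : 1 ≤ n) (hd : 0 ≤ d) (hl : 0 ≤ l) :
    Dw n d l =
      (2 * l + 1) * (∑ᶠ l' ∈ {l' : ℤ | l ≤ l'}, Dw (n - 1) (d - l) l') +
      l ^ 2 * ∑ᶠ l' ∈ {l' : ℤ | l - 1 ≤ l'}, Dw (n - 2) (d - (2 * l - 1)) l' :=
  weighted_last_fall_recurrence_general n d l hn hl
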